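/- For p = x_p + i y_p and z = x_z + i y_z two distinct points in the upper half-plane, exp(i·Γ_z(p)) / exp(i·Γ_p(z)) = ((x_p - x_z) - i(y_p + y_z)) / ((x_p - x_z) + i(y_p + y_z)). In particular, (p,z) ↦ exp(i(Γ_z(p) - Γ_p(z))) extends to a continuously differentiable (indeed real-analytic) function on ℍ × ℍ. -/

import Mathlib

/-!
With `a = x_p - x_z`, `s = y_p + y_z` and `d = y_z - y_p`, the numerators of `exp(iΓ_z(p))` and
`exp(iΓ_p(z))` factor as `(a - is)(a - id)` and `(a + is)(a - id)`, and the square roots are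
their moduli. Since `|a - is| = |a + is|` and `a - id ≠ 0` for `p ≠ z`, the quotient is
`(a - is)/(a + is)`, which is smooth wherever `s ≠ 0`.
-/

open Real

/-- `expGammaAt xp yp x y = exp(i·Γ_p(z))` for `p = xp + i·yp` and `z = x + i·y`, where
`Γ_p(z) := Γ(yp⁻¹(z - xp))` measures the oriented angle between the vertical geodesic ray
from `p` and the geodesic ray from `p` through `z`; explicitly
`exp(i·Γ_p(x+iy)) = ((x-xp)² + y² - yp² - i·2yp(x-xp)) / √(4(x-xp)²yp² + ((x-xp)²+y²-yp²)²)`. -/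
noncomputable def expGammaAt (xp yp x y : ℝ) : ℂ :=
  ((((x - xp) ^ 2 + y ^ 2 - yp ^ 2 : ℝ) : ℂ) - 2 * (yp : ℂ) * ((x - xp : ℝ) : ℂ) * Complex.I) /
    ((Real.sqrt (4 * (x - xp) ^ 2 * yp ^ 2 + ((x - xp) ^ 2 + y ^ 2 - yp ^ 2) ^ 2) : ℝ) : ℂ)

open Complex

lemma ofReal_add_mul_I_ne_zero {a b : ℝ} (hb : b ≠ 0) : (a : ℂ) + b * I ≠ 0 := fun h =>
  hb (by simpa using congrArg im h)

lemma norm_ofReal_sub_mul_I (a b : ℝ) : ‖(a : ℂ) - b * I‖ = ‖(a : ℂ) + b * I‖ := by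
  rw [← norm_conj]; simp

lemma expGammaAt_eq_div_norm (xp yp x y : ℝ) :
    expGammaAt xp yp x y =
      (((x - xp : ℝ) : ℂ) - (yp + y : ℝ) * I) * (((x - xp : ℝ) : ℂ) - (yp - y : ℝ) * I) /
        ‖(((x - xp : ℝ) : ℂ) - (yp + y : ℝ) * I) * (((x - xp : ℝ) : ℂ) - (yp - y : ℝ) * I)‖ := by
  have hN : (((x - xp : ℝ) : ℂ) - (yp + y : ℝ) * I) * (((x - xp : ℝ) : ℂ) - (yp - y : ℝ) * I) =
      (((x - xp) ^ 2 + y ^ 2 - yp ^ 2 : ℝ) : ℂ) + (-2 * yp * (x - xp) : ℝ) * I := by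
    push_cast
    linear_combination ((yp : ℂ) ^ 2 - (y : ℂ) ^ 2) * I_sq
  rw [hN, norm_add_mul_I, expGammaAt]
  congr 2
  · push_cast; ring
  · ring_nf

lemma mul_div_norm_div_mul_div_norm {𝕜 : Type*} [RCLike 𝕜] {u v w : 𝕜} (huv : ‖u‖ = ‖v‖)
    (hw : w ≠ 0) : u * w / (‖u * w‖ : 𝕜) / (v * w / (‖v * w‖ : 𝕜)) = u / v := by
  rcases eq_or_ne v 0 with rfl | hv
  · simp
  have hv' : (‖v‖ : 𝕜) ≠ 0 := by simpa using hv
  have hw' : (‖w‖ : 𝕜) ≠ 0 := by simpa using hw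
  rw [norm_mul, norm_mul, huv]
  push_cast
  field_simp

lemma contDiffOn_ofReal_sub_mul_I_div_add_mul_I {E : Type*} [NormedAddCommGroup E]
    [NormedSpace ℝ E] {f g : E → ℝ} {s : Set E} {n : WithTop ℕ∞} (hf : ContDiff ℝ n f)
    (hg : ContDiff ℝ n g) (hg₀ : ∀ x ∈ s, g x ≠ 0) :
    ContDiffOn ℝ n (fun x => ((f x : ℂ) - (g x : ℂ) * I) / ((f x : ℂ) + (g x : ℂ) * I)) s := by
  have hf' : ContDiff ℝ n fun x => (f x : ℂ) := ofRealCLM.contDiff.comp hf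
  have hg' : ContDiff ℝ n fun x => (g x : ℂ) := ofRealCLM.contDiff.comp hg
  simp only [div_eq_mul_inv]
  exact (hf'.sub (hg'.mul contDiff_const)).contDiffOn.mul <|
    (hf'.add (hg'.mul contDiff_const)).contDiffOn.inv fun x hx =>
      ofReal_add_mul_I_ne_zero (hg₀ x hx)

theorem expGamma_quotient_general (xp yp xz yz : ℝ)
    (hne : (xp, yp) ≠ (xz, yz)) :
    expGammaAt xz yz xp yp / expGammaAt xp yp xz yz =
      (((xp - xz : ℝ) : ℂ) - ((yp + yz : ℝ) : ℂ) * Complex.I) /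
        (((xp - xz : ℝ) : ℂ) + ((yp + yz : ℝ) : ℂ) * Complex.I) ∧
    ContDiffOn ℝ ⊤
      (fun q : (ℝ × ℝ) × (ℝ × ℝ) =>
        (((q.1.1 - q.2.1 : ℝ) : ℂ) - ((q.1.2 + q.2.2 : ℝ) : ℂ) * Complex.I) /
          (((q.1.1 - q.2.1 : ℝ) : ℂ) + ((q.1.2 + q.2.2 : ℝ) : ℂ) * Complex.I))
      {q : (ℝ × ℝ) × (ℝ × ℝ) | 0 < q.1.2 ∧ 0 < q.2.2} := by
  refine ⟨?_, contDiffOn_ofReal_sub_mul_I_div_add_mul_I (by fun_prop) (by fun_prop)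
    fun q hq => (add_pos hq.1 hq.2).ne'⟩
  have hsep : ((xp - xz : ℝ) : ℂ) - (yz - yp : ℝ) * I ≠ 0 := fun h => by
    have hre : xp - xz = 0 := by simpa using congrArg re h
    have him : yp - yz = 0 := by simpa using congrArg im h
    exact hne (Prod.ext (by linarith) (by linarith))
  have hswap : (((xz - xp : ℝ) : ℂ) - (yp + yz : ℝ) * I) * (((xz - xp : ℝ) : ℂ) - (yp - yz : ℝ) * I)
      = (((xp - xz : ℝ) : ℂ) + (yp + yz : ℝ) * I) * (((xp - xz : ℝ) : ℂ) - (yz - yp : ℝ) * I) := by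
    push_cast; ring
  rw [expGammaAt_eq_div_norm, expGammaAt_eq_div_norm, hswap, add_comm yz yp]
  exact mul_div_norm_div_mul_div_norm (norm_ofReal_sub_mul_I _ _) hsep

/-- For distinct points `p = xp + i·yp` and `z = xz + i·yz` in the upper half-plane,
`exp(i·Γ_z(p))/exp(i·Γ_p(z)) = ((xp-xz) - i(yp+yz))/((xp-xz) + i(yp+yz))`; in particular
`(p,z) ↦ exp(i(Γ_z(p) - Γ_p(z)))` extends to a smooth (hence continuously differentiable)
function on `ℍ × ℍ`. -/
theorem expGamma_quotient (xp yp xz yz : ℝ) (hp : 0 < yp) (hz : 0 < yz)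
    (hne : (xp, yp) ≠ (xz, yz)) :
    expGammaAt xz yz xp yp / expGammaAt xp yp xz yz =
      (((xp - xz : ℝ) : ℂ) - ((yp + yz : ℝ) : ℂ) * Complex.I) /
        (((xp - xz : ℝ) : ℂ) + ((yp + yz : ℝ) : ℂ) * Complex.I) ∧
    ContDiffOn ℝ ⊤
      (fun q : (ℝ × ℝ) × (ℝ × ℝ) =>
        (((q.1.1 - q.2.1 : ℝ) : ℂ) - ((q.1.2 + q.2.2 : ℝ) : ℂ) * Complex.I) /
          (((q.1.1 - q.2.1 : ℝ) : ℂ) + ((q.1.2 + q.2.2 : ℝ) : ℂ) * Complex.I))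
      {q : (ℝ × ℝ) × (ℝ × ℝ) | 0 < q.1.2 ∧ 0 < q.2.2} :=
  expGamma_quotient_general xp yp xz yz hne
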